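/- For all matrix indices i, j with 1 ≤ i, j ≤ m, the entry c_{ij} of the Boolean product C = A×B equals 1 if and only if C_{i₁,j₁} ⇒* w_{i₂}^{j₂+2δ} in the grammar G. Hence for the nonterminals C_{p,q}, derivation of such substrings coincides with c-derivation. -/

import Mathlib

/- Formalization of (part of) the reduction of Boolean matrix multiplication
to context-free grammar parsing (Lee, "Fast context-free grammar parsing
requires fast Boolean matrix multiplication"). -/

namespace CFGBMM

/-- Nonterminals of the grammars of the reduction. -/
inductive NT : Type where
  | S : NT                 -- start symbol
  | T : NT                 -- extra symbol of the CNF grammar G'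
  | W : NT                 -- derives arbitrary nonempty substrings
  | Wl : ℕ → NT            -- `W_ℓ` of G'
  | X : ℕ → NT             -- `X_ℓ` of G'
  | A : ℕ → ℕ → NT         -- `A_{p,q}`
  | B : ℕ → ℕ → NT         -- `B_{p,q}`
  | C : ℕ → ℕ → NT         -- `C_{p,q}`
deriving DecidableEq

abbrev Sym : Type := Symbol ℕ NT

/-- `d = ⌈m^(1/3)⌉`. -/
noncomputable def dOf (m : ℕ) : ℕ := ⌈(m : ℝ) ^ ((1 : ℝ) / 3)⌉₊

/-- The substring `w_ℓ ⋯ w_r` of the input string `w = w₁ ⋯ w_{3d+6}`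
(in which `w_ℓ` is just the terminal `ℓ`), as a sentential form. -/
def seg (l r : ℕ) : List Sym := (List.range' l (r + 1 - l)).map Symbol.terminal

/-- W-rules of `G`:  `W → w_ℓ W | w_ℓ`  for `1 ≤ ℓ ≤ 3d+6`. -/
def WRules (d : ℕ) : Set (ContextFreeRule ℕ NT) :=
  {r | ∃ l, 1 ≤ l ∧ l ≤ 3 * d + 6 ∧
    (r = ⟨NT.W, [Symbol.terminal l, Symbol.nonterminal NT.W]⟩ ∨
     r = ⟨NT.W, [Symbol.terminal l]⟩)}

/-- A-rules of `G`:  `A_{i₁,j₁} → w_{i₂} W w_{j₂+δ}`  for each nonzero entry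
`a_{ij}` of `A` (here `i₁ = ⌊i/d⌋`, `i₂ = (i mod d) + 2`, `δ = d + 2`). -/
def ARules (m d : ℕ) (a : ℕ → ℕ → ℕ) : Set (ContextFreeRule ℕ NT) :=
  {r | ∃ i j, 1 ≤ i ∧ i ≤ m ∧ 1 ≤ j ∧ j ≤ m ∧ a i j = 1 ∧
    r = ⟨NT.A (i / d) (j / d),
      [Symbol.terminal (i % d + 2), Symbol.nonterminal NT.W,
       Symbol.terminal (j % d + 2 + (d + 2))]⟩}

/-- B-rules of `G`:  `B_{i₁,j₁} → w_{i₂+1+δ} W w_{j₂+2δ}`  for each nonzero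
entry `b_{ij}` of `B`. -/
def BRules (m d : ℕ) (b : ℕ → ℕ → ℕ) : Set (ContextFreeRule ℕ NT) :=
  {r | ∃ i j, 1 ≤ i ∧ i ≤ m ∧ 1 ≤ j ∧ j ≤ m ∧ b i j = 1 ∧
    r = ⟨NT.B (i / d) (j / d),
      [Symbol.terminal (i % d + 2 + 1 + (d + 2)), Symbol.nonterminal NT.W,
       Symbol.terminal (j % d + 2 + 2 * (d + 2))]⟩}

/-- C-rules:  `C_{p,q} → A_{p,r} B_{r,q}`  for all `0 ≤ p, q, r ≤ d²`. -/
def CRules (d : ℕ) : Set (ContextFreeRule ℕ NT) :=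
  {r | ∃ p q t, p ≤ d ^ 2 ∧ q ≤ d ^ 2 ∧ t ≤ d ^ 2 ∧
    r = ⟨NT.C p q, [Symbol.nonterminal (NT.A p t), Symbol.nonterminal (NT.B t q)]⟩}

/-- S-rules of `G`:  `S → W C_{p,q} W`  for all `0 ≤ p, q ≤ d²`. -/
def SRules (d : ℕ) : Set (ContextFreeRule ℕ NT) :=
  {r | ∃ p q, p ≤ d ^ 2 ∧ q ≤ d ^ 2 ∧
    r = ⟨NT.S, [Symbol.nonterminal NT.W, Symbol.nonterminal (NT.C p q),
      Symbol.nonterminal NT.W]⟩}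

/-- The production set of the grammar `G` of the reduction. -/
def RulesG (m d : ℕ) (a b : ℕ → ℕ → ℕ) : Set (ContextFreeRule ℕ NT) :=
  WRules d ∪ ARules m d a ∪ BRules m d b ∪ CRules d ∪ SRules d

/-- One rewriting step using some rule from the rule set `R`. -/
def Produces (R : Set (ContextFreeRule ℕ NT)) (u v : List Sym) : Prop :=
  ∃ r ∈ R, r.Rewrites u v

/-- The usual context-free derivation relation `⇒*` for the rule set `R`. -/
def Derives (R : Set (ContextFreeRule ℕ NT)) : List Sym → List Sym → Prop :=
  Relation.ReflTransGen (Produces R)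

/-! ### Auxiliary machinery -/

/-- `segn l n` is the list of terminals `l, l+1, …, l+n-1`. -/
def segn (l n : ℕ) : List Sym := (List.range' l n).map Symbol.terminal

lemma seg_eq_segn (l r : ℕ) : seg l r = segn l (r + 1 - l) := rfl

@[simp] lemma segn_length (l n : ℕ) : (segn l n).length = n := by simp [segn]

lemma segn_add (l m n : ℕ) : segn l (m + n) = segn l m ++ segn (l + m) n := by
  unfold segn
  rw [← List.map_append, List.range'_append_1, Nat.add_comm]

@[simp] lemma segn_one (l : ℕ) : segn l 1 = [Symbol.terminal l] := rfl

lemma segn_terminals {l n : ℕ} : ∀ x ∈ segn l n, ∃ t, x = Symbol.terminal t := by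
  simp only [segn, List.mem_map]
  rintro x ⟨t, -, rfl⟩; exact ⟨t, rfl⟩

lemma segn_eq_append {l n : ℕ} {s t : List Sym} (h : segn l n = s ++ t) :
    s = segn l s.length ∧ t = segn (l + s.length) t.length := by
  have hlen : n = s.length + t.length := by
    have := congrArg List.length h; simpa using this
  rw [hlen, segn_add] at h
  have h2 := List.append_inj h.symm (by simp)
  exact ⟨by rw [← h2.1], by rw [← h2.2]⟩

lemma derives_congr {R : Set (ContextFreeRule ℕ NT)} {u v : List Sym}
    (p q : List Sym) (h : Derives R u v) : Derives R (p ++ u ++ q) (p ++ v ++ q) := by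
  induction h with
  | refl => exact .refl
  | tail _ hstep ih =>
    obtain ⟨r, hr, hrw⟩ := hstep
    exact ih.tail ⟨r, hr, (hrw.append_left p).append_right q⟩

lemma derives_append {R : Set (ContextFreeRule ℕ NT)} {u₁ u₂ v₁ v₂ : List Sym}
    (h1 : Derives R u₁ v₁) (h2 : Derives R u₂ v₂) :
    Derives R (u₁ ++ u₂) (v₁ ++ v₂) := by
  have hA : Derives R (u₁ ++ u₂) (v₁ ++ u₂) := by simpa using derives_congr [] u₂ h1
  have hB : Derives R (v₁ ++ u₂) (v₁ ++ v₂) := by simpa using derives_congr v₁ [] h2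
  exact hA.trans hB

lemma derives_terminal_self {R : Set (ContextFreeRule ℕ NT)} {u v : List Sym}
    (hu : ∀ x ∈ u, ∃ t, x = Symbol.terminal t) (h : Derives R u v) : v = u := by
  rcases h.cases_head with heq | ⟨c, hc, -⟩
  · exact heq.symm
  · exfalso
    obtain ⟨r, -, hrw⟩ := hc
    obtain ⟨p, q, h1, -⟩ := hrw.exists_parts
    obtain ⟨t, ht⟩ := hu (Symbol.nonterminal r.input) (by rw [h1]; simp)
    cases ht

lemma derives_split {R : Set (ContextFreeRule ℕ NT)} {s w : List Sym} (h : Derives R s w) :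
    ∀ u v : List Sym, s = u ++ v →
      ∃ w₁ w₂, w = w₁ ++ w₂ ∧ Derives R u w₁ ∧ Derives R v w₂ := by
  induction h using Relation.ReflTransGen.head_induction_on with
  | refl => exact fun u v huv => ⟨u, v, huv, .refl, .refl⟩
  | head hstep _ ih =>
    rintro u v rfl
    obtain ⟨r, hr, hrw⟩ := hstep
    obtain ⟨p, q, heq, rfl⟩ := hrw.exists_parts
    rw [List.append_assoc p] at heq
    rcases List.append_eq_append_iff.mp heq with ⟨l, rfl, hl⟩ | ⟨l, rfl, hl⟩
    · obtain ⟨w₁, w₂, rfl, hu, hv⟩ := ih u (l ++ (r.output ++ q)) (by simp)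
      refine ⟨w₁, w₂, rfl, hu, .head ⟨r, hr, ?_⟩ hv⟩
      rw [← List.append_assoc] at hl ⊢
      rw [hl]
      exact r.rewrites_of_exists_parts l q
    · rcases l with _ | ⟨x, l'⟩
      · simp only [List.nil_append] at hl
        obtain ⟨w₁, w₂, rfl, hu, hv⟩ := ih (p ++ []) (r.output ++ q) (by simp)
        refine ⟨w₁, w₂, rfl, by simpa using hu, .head ⟨r, hr, ?_⟩ hv⟩
        rw [← hl]
        simpa using r.rewrites_of_exists_parts [] q
      · have hx : x = Symbol.nonterminal r.input := by
          have := congrArg (fun s => s.head?) hl; simpa using this.symm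
        have hq : l' ++ v = q := by
          have := congrArg List.tail hl; simpa using this.symm
        subst hx; subst hq
        obtain ⟨w₁, w₂, rfl, hu, hv⟩ := ih (p ++ r.output ++ l') v (by simp)
        refine ⟨w₁, w₂, rfl, .head ⟨r, hr, ?_⟩ hu, hv⟩
        simpa using r.rewrites_of_exists_parts p l'

lemma produces_single {R : Set (ContextFreeRule ℕ NT)} {n : NT} {v : List Sym}
    (h : Produces R [Symbol.nonterminal n] v) :
    ∃ r ∈ R, r.input = n ∧ v = r.output := by
  obtain ⟨r, hr, hrw⟩ := h
  obtain ⟨p, q, h1, h2⟩ := hrw.exists_parts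
  have hp : p = [] ∧ q = [] := by
    have := congrArg List.length h1
    simp only [List.length_append, List.length_singleton, List.length_cons] at this
    constructor <;> rw [← List.length_eq_zero_iff] <;> omega
  obtain ⟨rfl, rfl⟩ := hp
  simp only [List.nil_append, List.append_nil] at h1 h2
  refine ⟨r, hr, ?_, h2⟩
  injection h1 with h1' _
  injection h1' with h1''
  exact h1''.symm

lemma derives_nt_terminals {R : Set (ContextFreeRule ℕ NT)} {n : NT} {w : List Sym}
    (h : Derives R [Symbol.nonterminal n] w)
    (hw : ∀ x ∈ w, ∃ t, x = Symbol.terminal t) :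
    ∃ r ∈ R, r.input = n ∧ Derives R r.output w := by
  rcases h.cases_head with heq | ⟨c, hc, hcw⟩
  · exfalso
    obtain ⟨t, ht⟩ := hw (Symbol.nonterminal n) (by rw [← heq]; simp)
    cases ht
  · obtain ⟨r, hr, hin, rfl⟩ := produces_single hc
    exact ⟨r, hr, hin, hcw⟩

/-! ### Membership helpers -/

section RulesLemmas
variable {m d : ℕ} {a b : ℕ → ℕ → ℕ}

lemma memW {r : ContextFreeRule ℕ NT} (h : r ∈ WRules d) : r ∈ RulesG m d a b :=
  Or.inl (Or.inl (Or.inl (Or.inl h)))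
lemma memA {r : ContextFreeRule ℕ NT} (h : r ∈ ARules m d a) : r ∈ RulesG m d a b :=
  Or.inl (Or.inl (Or.inl (Or.inr h)))
lemma memB {r : ContextFreeRule ℕ NT} (h : r ∈ BRules m d b) : r ∈ RulesG m d a b :=
  Or.inl (Or.inl (Or.inr h))
lemma memC {r : ContextFreeRule ℕ NT} (h : r ∈ CRules d) : r ∈ RulesG m d a b :=
  Or.inl (Or.inr h)
lemma memS {r : ContextFreeRule ℕ NT} (h : r ∈ SRules d) : r ∈ RulesG m d a b :=
  Or.inr h

lemma produces_rule {R : Set (ContextFreeRule ℕ NT)} {n : NT} {o : List Sym}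
    (h : (⟨n, o⟩ : ContextFreeRule ℕ NT) ∈ R) :
    Produces R [Symbol.nonterminal n] o :=
  ⟨⟨n, o⟩, h, ContextFreeRule.Rewrites.input_output⟩

lemma W_derives (m d : ℕ) (a b : ℕ → ℕ → ℕ) :
    ∀ n l, 1 ≤ l → l + n ≤ 3 * d + 6 →
    Derives (RulesG m d a b) [Symbol.nonterminal NT.W] (segn l (n + 1)) := by
  intro n
  induction n with
  | zero =>
    intro l h1 h2
    exact Relation.ReflTransGen.single
      (produces_rule (memW ⟨l, h1, by omega, Or.inr rfl⟩))
  | succ n ih =>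
    intro l h1 h2
    refine Relation.ReflTransGen.head
      (produces_rule (memW ⟨l, h1, by omega, Or.inl rfl⟩)) ?_
    have hseg : segn l (n + 1 + 1) = [Symbol.terminal l] ++ segn (l + 1) (n + 1) := by
      rw [show n + 1 + 1 = 1 + (n + 1) by omega, segn_add, segn_one]
    rw [hseg]
    exact derives_append (u₁ := [Symbol.terminal l]) (u₂ := [Symbol.nonterminal NT.W])
      .refl (ih (l + 1) (by omega) (by omega))

/-- Derivation `w_α W w_{α+s+1} ⇒* w_α w_{α+1} ⋯ w_{α+s+1}`. -/
lemma tWt_derives (m d : ℕ) (a b : ℕ → ℕ → ℕ) {α s : ℕ}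
    (h1 : 1 ≤ α) (hs : 1 ≤ s) (h2 : α + s + 1 ≤ 3 * d + 6) :
    Derives (RulesG m d a b)
      [Symbol.terminal α, Symbol.nonterminal NT.W, Symbol.terminal (α + s + 1)]
      (segn α (s + 2)) := by
  obtain ⟨s', rfl⟩ : ∃ s', s = s' + 1 := ⟨s - 1, by omega⟩
  have hseg : segn α (s' + 1 + 2) =
      [Symbol.terminal α] ++ segn (α + 1) (s' + 1) ++ [Symbol.terminal (α + s' + 2)] := by
    rw [show s' + 1 + 2 = 1 + ((s' + 1) + 1) by omega, segn_add, segn_one,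
      segn_add (α + 1) (s' + 1) 1, segn_one,
      show α + 1 + (s' + 1) = α + s' + 2 by omega, List.append_assoc]
  rw [hseg, show α + (s' + 1) + 1 = α + s' + 2 by omega,
    show ([Symbol.terminal α, Symbol.nonterminal NT.W, Symbol.terminal (α + s' + 2)] : List Sym)
      = [Symbol.terminal α] ++ [Symbol.nonterminal NT.W] ++ [Symbol.terminal (α + s' + 2)] from rfl]
  exact derives_append (derives_append .refl (W_derives m d a b s' (α + 1) (by omega) (by omega)))
    .refl

end RulesLemmas

lemma dOf_pos {m : ℕ} (hm : 1 ≤ m) : 1 ≤ dOf m := by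
  rw [dOf]
  have : (0 : ℝ) < (m : ℝ) ^ ((1 : ℝ) / 3) :=
    Real.rpow_pos_of_pos (by exact_mod_cast hm) _
  exact Nat.ceil_pos.mpr this

lemma le_dOf_cubed (m : ℕ) : m ≤ dOf m ^ 3 := by
  have h1 : ((m : ℝ) ^ ((1 : ℝ) / 3)) ≤ (dOf m : ℝ) := Nat.le_ceil _
  have h0 : (0 : ℝ) ≤ (m : ℝ) ^ ((1 : ℝ) / 3) := Real.rpow_nonneg (Nat.cast_nonneg m) _
  have h2 : ((m : ℝ) ^ ((1 : ℝ) / 3)) ^ (3 : ℕ) ≤ ((dOf m : ℝ)) ^ (3 : ℕ) :=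
    pow_le_pow_left₀ h0 h1 3
  rw [← Real.rpow_natCast ((m : ℝ) ^ ((1 : ℝ) / 3)) 3, ← Real.rpow_mul (Nat.cast_nonneg m)] at h2
  norm_num at h2
  exact_mod_cast h2

lemma term_singleton_terminals (c : ℕ) :
    ∀ x ∈ [(Symbol.terminal c : Sym)], ∃ t, x = Symbol.terminal t := by
  rintro x hx; rw [List.mem_singleton] at hx; exact ⟨c, hx⟩

/-- **Corollary 1 of the paper.** For `1 ≤ i, j ≤ m`, the entry `c_{ij}` of the
Boolean product `C = A × B` is `1` iff `C_{i₁,j₁} ⇒* w_{i₂}^{j₂+2δ}` in `G`;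
hence, for the nonterminals `C_{p,q}`, derivation of such substrings coincides
with c-derivation. -/
theorem bmm_entry_iff_derives
    (m : ℕ) (hm : 1 ≤ m) (a b : ℕ → ℕ → ℕ)
    (ha : ∀ i j, a i j = 0 ∨ a i j = 1) (hb : ∀ i j, b i j = 0 ∨ b i j = 1)
    (d δ : ℕ) (hd : d = dOf m) (hδ : δ = d + 2)
    (i j : ℕ) (hi1 : 1 ≤ i) (him : i ≤ m) (hj1 : 1 ≤ j) (hjm : j ≤ m) :
    ((∃ k, 1 ≤ k ∧ k ≤ m ∧ a i k = 1 ∧ b k j = 1) ↔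
      Derives (RulesG m d a b) [Symbol.nonterminal (NT.C (i / d) (j / d))]
        (seg (i % d + 2) (j % d + 2 + 2 * δ))) ∧
    (Derives (RulesG m d a b) [Symbol.nonterminal (NT.C (i / d) (j / d))]
        (seg (i % d + 2) (j % d + 2 + 2 * δ)) ↔
      (Derives (RulesG m d a b) [Symbol.nonterminal (NT.C (i / d) (j / d))]
          (seg (i % d + 2) (j % d + 2 + 2 * δ)) ∧
       Derives (RulesG m d a b) [Symbol.nonterminal NT.S]
          (seg 1 (i % d + 2 - 1) ++ [Symbol.nonterminal (NT.C (i / d) (j / d))] ++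
            seg (j % d + 2 + 2 * δ + 1) (3 * d + 6)))) := by
  subst hδ
  have hd1 : 1 ≤ d := hd ▸ dOf_pos hm
  have hm3 : m ≤ d ^ 3 := hd ▸ le_dOf_cubed m
  have hiM : i % d < d := Nat.mod_lt _ hd1
  have hjM : j % d < d := Nat.mod_lt _ hd1
  have hdivle : ∀ x : ℕ, x ≤ m → x / d ≤ d ^ 2 := by
    intro x hx
    have h1 : x / d ≤ d ^ 3 / d := Nat.div_le_div_right (le_trans hx hm3)
    have h2 : d ^ 3 / d = d ^ 2 := by
      rw [pow_succ]
      exact Nat.mul_div_cancel _ hd1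
    omega
  have hsegT : seg (i % d + 2) (j % d + 2 + 2 * (d + 2))
      = segn (i % d + 2) (j % d + 2 * d + 5 - i % d) := by
    rw [seg_eq_segn]; congr 1 <;> omega
  constructor
  · constructor
    · rintro ⟨k, hk1, hkm, hak, hbk⟩
      have hkM : k % d < d := Nat.mod_lt _ hd1
      have step1 : Produces (RulesG m d a b)
          [Symbol.nonterminal (NT.C (i / d) (j / d))]
          ([Symbol.nonterminal (NT.A (i / d) (k / d))] ++
           [Symbol.nonterminal (NT.B (k / d) (j / d))]) :=
        produces_rule (memC ⟨i / d, j / d, k / d, hdivle i him, hdivle j hjm, hdivle k hkm, rfl⟩)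
      have hA : Derives (RulesG m d a b)
          [Symbol.nonterminal (NT.A (i / d) (k / d))]
          (segn (i % d + 2) ((k % d + d + 1 - i % d) + 2)) := by
        refine Relation.ReflTransGen.head
          (produces_rule (memA ⟨i, k, hi1, him, hk1, hkm, hak, rfl⟩)) ?_
        rw [show k % d + 2 + (d + 2) = (i % d + 2) + (k % d + d + 1 - i % d) + 1 by omega]
        exact tWt_derives m d a b (by omega) (by omega) (by omega)
      have hB : Derives (RulesG m d a b)
          [Symbol.nonterminal (NT.B (k / d) (j / d))]
          (segn (k % d + d + 5) ((j % d + d - k % d) + 2)) := by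
        refine Relation.ReflTransGen.head
          (produces_rule (memB ⟨k, j, hk1, hkm, hj1, hjm, hbk, rfl⟩)) ?_
        rw [show k % d + 2 + 1 + (d + 2) = k % d + d + 5 by omega,
          show j % d + 2 + 2 * (d + 2) = (k % d + d + 5) + (j % d + d - k % d) + 1 by omega]
        exact tWt_derives m d a b (by omega) (by omega) (by omega)
      refine Relation.ReflTransGen.head step1 ?_
      rw [hsegT]
      have e3 : segn (i % d + 2) (j % d + 2 * d + 5 - i % d)
          = segn (i % d + 2) ((k % d + d + 1 - i % d) + 2)
            ++ segn ((i % d + 2) + ((k % d + d + 1 - i % d) + 2)) ((j % d + d - k % d) + 2) := by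
        rw [← segn_add]; congr 1; omega
      rw [e3, show (i % d + 2) + ((k % d + d + 1 - i % d) + 2) = k % d + d + 5 by omega]
      exact derives_append hA hB
    · intro h
      rw [hsegT] at h
      obtain ⟨r, hr, hin, hout⟩ := derives_nt_terminals h segn_terminals
      rcases hr with (((hw | ha') | hb') | hc') | hs'
      · exfalso; obtain ⟨l, -, -, hc⟩ := hw
        rcases hc with rfl | rfl <;> exact NT.noConfusion hin
      · exfalso; obtain ⟨i', j', -, -, -, -, -, rfl⟩ := ha'; exact NT.noConfusion hin
      · exfalso; obtain ⟨i', j', -, -, -, -, -, rfl⟩ := hb'; exact NT.noConfusion hin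
      · obtain ⟨p, q, t, -, -, -, rfl⟩ := hc'
        have hin' : NT.C p q = NT.C (i / d) (j / d) := hin
        injection hin' with hp hq
        subst hp; subst hq
        obtain ⟨w₁, w₂, hw12, hderA, hderB⟩ := derives_split hout
          [Symbol.nonterminal (NT.A (i / d) t)] [Symbol.nonterminal (NT.B t (j / d))] rfl
        obtain ⟨e1, e2⟩ := segn_eq_append hw12
        have hLlen : j % d + 2 * d + 5 - i % d = w₁.length + w₂.length := by
          have := congrArg List.length hw12; simpa using this
        -- analyze the A-part
        obtain ⟨r₁, hr₁, hin₁, hout₁⟩ := derives_nt_terminals hderA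
          (by rw [e1]; exact segn_terminals)
        rcases hr₁ with (((hw | ha') | hb') | hc₁') | hs'
        · exfalso; obtain ⟨l, -, -, hc⟩ := hw
          rcases hc with rfl | rfl <;> exact NT.noConfusion hin₁
        rotate_left
        · exfalso; obtain ⟨i', j', -, -, -, -, -, rfl⟩ := hb'; exact NT.noConfusion hin₁
        · exfalso; obtain ⟨p, q, t', -, -, -, rfl⟩ := hc₁'; exact NT.noConfusion hin₁
        · exfalso; obtain ⟨p, q, -, -, rfl⟩ := hs'; exact NT.noConfusion hin₁
        obtain ⟨i', k', hi'1, hi'm, hk'1, hk'm, hai', rfl⟩ := ha'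
        have hin₁' : NT.A (i' / d) (k' / d) = NT.A (i / d) t := hin₁
        injection hin₁' with hdi hdk
        obtain ⟨u₁, rest, hw₁eq, hu₁, hrest⟩ := derives_split hout₁
          [Symbol.terminal (i' % d + 2)]
          [Symbol.nonterminal NT.W, Symbol.terminal (k' % d + 2 + (d + 2))] rfl
        have hu₁' : u₁ = [Symbol.terminal (i' % d + 2)] :=
          derives_terminal_self (term_singleton_terminals _) hu₁
        obtain ⟨u₂, u₃, hresteq, -, hu₃⟩ := derives_split hrest [Symbol.nonterminal NT.W]
          [Symbol.terminal (k' % d + 2 + (d + 2))] rfl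
        have hu₃' : u₃ = [Symbol.terminal (k' % d + 2 + (d + 2))] :=
          derives_terminal_self (term_singleton_terminals _) hu₃
        have h_w1 : segn (i % d + 2) w₁.length =
            [Symbol.terminal (i' % d + 2)] ++ (u₂ ++ [Symbol.terminal (k' % d + 2 + (d + 2))]) := by
          rw [← e1, hw₁eq, hu₁', hresteq, hu₃']
        have hx := (segn_eq_append h_w1).1
        simp only [List.length_singleton, segn_one, List.cons.injEq, and_true] at hx
        have hx : i' % d + 2 = i % d + 2 := Symbol.terminal.inj hx
        have hy := (segn_eq_append ((segn_eq_append h_w1).2).symm).2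
        simp only [List.length_singleton, segn_one, List.cons.injEq, and_true] at hy
        have hy : k' % d + 2 + (d + 2) = i % d + 2 + 1 + u₂.length := Symbol.terminal.inj hy
        have hn₁ : w₁.length = u₂.length + 2 := by
          have := congrArg List.length h_w1; simpa using this
        -- analyze the B-part
        obtain ⟨r₂, hr₂, hin₂, hout₂⟩ := derives_nt_terminals hderB
          (by rw [e2]; exact segn_terminals)
        rcases hr₂ with (((hw | ha₂') | hb₂') | hc₂') | hs'
        · exfalso; obtain ⟨l, -, -, hc⟩ := hw
          rcases hc with rfl | rfl <;> exact NT.noConfusion hin₂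
        · exfalso; obtain ⟨i'', j', -, -, -, -, -, rfl⟩ := ha₂'; exact NT.noConfusion hin₂
        rotate_left
        · exfalso; obtain ⟨p, q, t', -, -, -, rfl⟩ := hc₂'; exact NT.noConfusion hin₂
        · exfalso; obtain ⟨p, q, -, -, rfl⟩ := hs'; exact NT.noConfusion hin₂
        obtain ⟨k'', j', hk''1, hk''m, hj'1, hj'm, hbj', rfl⟩ := hb₂'
        have hin₂' : NT.B (k'' / d) (j' / d) = NT.B t (j / d) := hin₂
        injection hin₂' with hdk'' hdj
        obtain ⟨v₁, rest₂, hw₂eq, hv₁, hrest₂⟩ := derives_split hout₂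
          [Symbol.terminal (k'' % d + 2 + 1 + (d + 2))]
          [Symbol.nonterminal NT.W, Symbol.terminal (j' % d + 2 + 2 * (d + 2))] rfl
        have hv₁' : v₁ = [Symbol.terminal (k'' % d + 2 + 1 + (d + 2))] :=
          derives_terminal_self (term_singleton_terminals _) hv₁
        obtain ⟨v₂, v₃, hrest₂eq, -, hv₃⟩ := derives_split hrest₂ [Symbol.nonterminal NT.W]
          [Symbol.terminal (j' % d + 2 + 2 * (d + 2))] rfl
        have hv₃' : v₃ = [Symbol.terminal (j' % d + 2 + 2 * (d + 2))] :=
          derives_terminal_self (term_singleton_terminals _) hv₃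
        have h_w2 : segn (i % d + 2 + w₁.length) w₂.length =
            [Symbol.terminal (k'' % d + 2 + 1 + (d + 2))] ++
              (v₂ ++ [Symbol.terminal (j' % d + 2 + 2 * (d + 2))]) := by
          rw [← e2, hw₂eq, hv₁', hrest₂eq, hv₃']
        have hx' := (segn_eq_append h_w2).1
        simp only [List.length_singleton, segn_one, List.cons.injEq, and_true] at hx'
        have hx' : k'' % d + 2 + 1 + (d + 2) = i % d + 2 + w₁.length := Symbol.terminal.inj hx'
        have hy' := (segn_eq_append ((segn_eq_append h_w2).2).symm).2
        simp only [List.length_singleton, segn_one, List.cons.injEq, and_true] at hy'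
        have hy' : j' % d + 2 + 2 * (d + 2) = i % d + 2 + w₁.length + 1 + v₂.length :=
          Symbol.terminal.inj hy'
        have hn₂ : w₂.length = v₂.length + 2 := by
          have := congrArg List.length h_w2; simpa using this
        -- solve the arithmetic
        have hmi : i' % d = i % d := by omega
        have hmk : k'' % d = k' % d := by omega
        have hmj : j' % d = j % d := by omega
        have hieq : i' = i := by
          have e := Nat.div_add_mod i' d
          rw [hdi, hmi] at e
          exact e.symm.trans (Nat.div_add_mod i d)
        have hkeq : k'' = k' := by
          have e := Nat.div_add_mod k'' d
          rw [hdk'', ← hdk, hmk] at e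
          exact e.symm.trans (Nat.div_add_mod k' d)
        have hjeq : j' = j := by
          have e := Nat.div_add_mod j' d
          rw [hdj, hmj] at e
          exact e.symm.trans (Nat.div_add_mod j d)
        exact ⟨k', hk'1, hk'm, hieq ▸ hai', hkeq ▸ hjeq ▸ hbj'⟩
      · exfalso; obtain ⟨p, q, -, -, rfl⟩ := hs'; exact NT.noConfusion hin
  · constructor
    · intro h
      refine ⟨h, ?_⟩
      have step : Produces (RulesG m d a b) [Symbol.nonterminal NT.S]
          ([Symbol.nonterminal NT.W] ++ [Symbol.nonterminal (NT.C (i / d) (j / d))] ++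
            [Symbol.nonterminal NT.W]) :=
        produces_rule (memS ⟨i / d, j / d, hdivle i him, hdivle j hjm, rfl⟩)
      refine Relation.ReflTransGen.head step ?_
      have hseg1 : seg 1 (i % d + 2 - 1) = segn 1 (i % d + 1) := by
        rw [seg_eq_segn]; congr 1 <;> omega
      have hseg2 : seg (j % d + 2 + 2 * (d + 2) + 1) (3 * d + 6)
          = segn (j % d + 2 * d + 7) (d - j % d) := by
        rw [seg_eq_segn]; congr 1 <;> omega
      rw [hseg1, hseg2]
      have W1 : Derives (RulesG m d a b) [Symbol.nonterminal NT.W] (segn 1 (i % d + 1)) :=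
        W_derives m d a b (i % d) 1 le_rfl (by omega)
      have W2 : Derives (RulesG m d a b) [Symbol.nonterminal NT.W]
          (segn (j % d + 2 * d + 7) (d - j % d)) := by
        have := W_derives m d a b (d - j % d - 1) (j % d + 2 * d + 7) (by omega) (by omega)
        rwa [show d - j % d - 1 + 1 = d - j % d by omega] at this
      exact derives_append (derives_append W1 .refl) W2
    · rintro ⟨h, -⟩; exact h

end CFGBMM
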